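/- Let A be a central hyperplane arrangement. If I is a modular ideal of L(A), then either I or its meet-complement I^c is a principal ideal generated by a modular element of L(A). -/

import Mathlib

open Polynomial
open scoped Classical Pointwise

namespace HypArr

variable {K V : Type*} [Field K] [AddCommGroup V] [Module K V] [FiniteDimensional K V]

/-- `A` is an affine hyperplane arrangement: a finite set of affine hyperplanes,
i.e. nonempty affine subspaces of codimension one. -/
def IsArrangement (A : Finset (AffineSubspace K V)) : Prop :=
  ∀ H ∈ A, H ≠ ⊥ ∧ Module.finrank K V = Module.finrank K H.direction + 1

/-- The intersection poset `L(A)`: all nonempty intersections of subfamilies of `A`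
(the empty intersection being the whole space `⊤`).  The order of `L(A)` is *reverse*
inclusion, so `X ≤ Y` in `L(A)` corresponds to `Y ≤ X` as affine subspaces; the
minimal element `0̂` of `L(A)` is the whole space `⊤`. -/
noncomputable def poset (A : Finset (AffineSubspace K V)) : Finset (AffineSubspace K V) :=
  (A.powerset.image fun S => S.inf id).filter (· ≠ ⊥)

/-- The rank of an element of `L(A)`: its codimension in `V`. -/
noncomputable def rk (X : AffineSubspace K V) : ℕ :=
  Module.finrank K V - Module.finrank K X.direction

/-- The rank `r(A)` of the arrangement: the maximal rank of an element of `L(A)`. -/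
noncomputable def rank (A : Finset (AffineSubspace K V)) : ℕ := (poset A).sup rk

/-- An ideal of `L(A)` (with respect to the reverse-inclusion order of `L(A)`):
a downward closed subset of `L(A)`. -/
def IsIdeal (A I : Finset (AffineSubspace K V)) : Prop :=
  I ⊆ poset A ∧ ∀ X ∈ I, ∀ Y ∈ poset A, X ≤ Y → Y ∈ I

/-- The principal ideal `⟨X⟩ = {Y ∈ L(A) : Y ≤ X}` of `L(A)` (in the
reverse-inclusion order of `L(A)`, i.e. `{Y ∈ L(A) : X ⊆ Y}`). -/
noncomputable def principal (A : Finset (AffineSubspace K V)) (X : AffineSubspace K V) :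
    Finset (AffineSubspace K V) :=
  (poset A).filter fun Y => X ≤ Y

/-- The meet `X ∧ Y` in `L(A)`: the greatest element of `L(A)` below both `X` and `Y`
(in the reverse-inclusion order); in terms of affine subspaces it is the smallest
element of `L(A)` containing both `X` and `Y`.  In particular `X ∧ Y = 0̂` iff
`lmeet A X Y = ⊤`. -/
noncomputable def lmeet (A : Finset (AffineSubspace K V)) (X Y : AffineSubspace K V) :
    AffineSubspace K V :=
  sInf {W | W ∈ poset A ∧ X ≤ W ∧ Y ≤ W}

/-- An ideal decomposition `{I_1, …, I_m}` of `L(A)`: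
(I1) for every `X ∈ L(A) \ {0̂}` some `I j ∩ ⟨X⟩` is a nontrivial principal ideal;
(I2) joins `X_1 ∨ ⋯ ∨ X_m` (i.e. intersections) of members of the ideals exist;
(I3) these joins satisfy the rank condition. -/
def IsIdealDecomposition (A : Finset (AffineSubspace K V)) {m : ℕ}
    (I : Fin m → Finset (AffineSubspace K V)) : Prop :=
  (∀ i, IsIdeal A (I i)) ∧
  (∀ X ∈ poset A, X ≠ ⊤ →
    ∃ j, ∃ Z ∈ poset A, Z ≠ ⊤ ∧ I j ∩ principal A X = principal A Z) ∧
  (∀ f : Fin m → AffineSubspace K V, (∀ i, f i ∈ I i) →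
    Finset.univ.inf f ≠ (⊥ : AffineSubspace K V)) ∧
  (∀ f : Fin m → AffineSubspace K V, (∀ i, f i ∈ I i) →
    rk (Finset.univ.inf f) = ∑ i, rk (f i))

/-- The meet-complement `I^c = {Y ∈ L(A) : Y ∧ X = 0̂ for all X ∈ I}`. -/
noncomputable def meetCompl (A I : Finset (AffineSubspace K V)) : Finset (AffineSubspace K V) :=
  (poset A).filter fun Y => ∀ X ∈ I, lmeet A X Y = ⊤

/-- An ideal `I` is modular if `{I, I^c}` is an ideal decomposition of `L(A)`. -/
def IsModularIdeal (A I : Finset (AffineSubspace K V)) : Prop :=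
  IsIdealDecomposition A ![I, meetCompl A I]

/-- `μ` is the Möbius function `μ(0̂, ·)` of the finite intersection poset `P`
(ordered by reverse inclusion, with minimal element the maximal affine subspace in `P`):
the sum of `μ` over an interval `[0̂, X]` is `1` if `X = 0̂` and `0` otherwise. -/
def IsMobiusOn (P : Finset (AffineSubspace K V)) (μ : AffineSubspace K V → ℤ) : Prop :=
  ∀ X ∈ P, ∑ Z ∈ P.filter (fun Z => X ≤ Z), μ Z = if ∀ Z ∈ P, Z ≤ X then 1 else 0

/-- The characteristic polynomial `χ(t) = ∑_{X ∈ P} μ(X) t^{dim X}` of an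
intersection poset `P` with Möbius function `μ`. -/
noncomputable def charPolyOn (P : Finset (AffineSubspace K V)) (μ : AffineSubspace K V → ℤ) :
    Polynomial ℤ :=
  ∑ X ∈ P, C (μ X) * Polynomial.X ^ (Module.finrank K X.direction)

/-- The characteristic polynomial `χ̃(I, t) = ∑_{X ∈ I} μ(X) t^{r(I) - r(X)}` of an ideal. -/
noncomputable def tildeChi (μ : AffineSubspace K V → ℤ) (I : Finset (AffineSubspace K V)) :
    Polynomial ℤ :=
  ∑ X ∈ I, C (μ X) * Polynomial.X ^ (I.sup rk - rk X)

/-- A central arrangement: the intersection of all hyperplanes is nonempty. -/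
def IsCentral (A : Finset (AffineSubspace K V)) : Prop := A.inf id ≠ ⊥

/-- A modular element `Z ∈ L(A)`: `r(Z) + r(X) = r(Z ∧ X) + r(Z ∨ X)` for all `X ∈ L(A)`
(the join `Z ∨ X` being the intersection `Z ⊓ X` of affine subspaces). -/
def IsModularElement (A : Finset (AffineSubspace K V)) (Z : AffineSubspace K V) : Prop :=
  Z ∈ poset A ∧ ∀ X ∈ poset A, rk Z + rk X = rk (lmeet A Z X) + rk (Z ⊓ X)

/-- The intersection poset of the restriction `B^W = {H ∩ W : H ∈ B, H ∩ W ≠ ∅}`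
of the arrangement `B` to the affine subspace `W`, realized as a finset of affine
subspaces of the ambient space (with minimal element `W`). -/
noncomputable def tracePoset (B : Finset (AffineSubspace K V)) (W : AffineSubspace K V) :
    Finset (AffineSubspace K V) :=
  (((B.filter fun H => H ⊓ W ≠ ⊥).image fun H => H ⊓ W).powerset.image
      fun S => W ⊓ S.inf id).filter (· ≠ ⊥)

/-- A modular subarrangement `B ⊆ A`: `L(B)`, viewed as a subposet of `L(A)`,
is a modular ideal of `L(A)`. -/
def IsModularSub (A B : Finset (AffineSubspace K V)) : Prop :=
  B ⊆ A ∧ IsModularIdeal A (poset B)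

end HypArr

/-!
Apply (I1) to the center `c = ⋂ A`, the top of `L(A)`: since `⟨c⟩ = L(A)`, one of the two ideals
is a principal ideal `⟨Z⟩`, and the other one, `J`, satisfies (I1)–(I3) against it.

To see that `Z` is modular, write `X ∈ L(A)` as `H₁ ∩ ⋯ ∩ Hₖ` and intersect with the hyperplanes
one at a time, keeping some `Y ∈ J` with `X ⊆ Y`, `Z ∩ Y = Z ∩ X` and `r(X) ≤ r(Y) + r(Z ∧ X)`.
By (I1) every hyperplane `H` contains `Z` or lies in `J`. Let `H ⊉ X`. If `H ⊇ Z`, then `Y` stays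
and `r(Z ∧ X)` grows by one. If `H ∈ J`, apply (I1) to `Y ∩ H`: either `Y ∩ H ∈ J` replaces `Y`, or
`Y ∩ H ⊆ W` for some `W ⊇ Z` of positive rank, and then (I3) forces `Y ∩ H = W ∩ Y`, so that
`Y` stays, `Z ∩ Y ⊆ H`, and `r(Z ∧ X)` grows by one. In the end (I3) gives
`r(Z) + r(X) ≤ r(Z ∩ Y) + r(Z ∧ X) = r(Z ∨ X) + r(Z ∧ X)`, and the reverse inequality is the
submodularity of codimension.
-/

namespace HypArr

section

variable {K V : Type*} [Field K] [AddCommGroup V] [Module K V]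

section Rank

@[simp]
lemma rk_top : rk (⊤ : AffineSubspace K V) = 0 := by
  rw [rk, AffineSubspace.direction_top, finrank_top, Nat.sub_self]

variable [FiniteDimensional K V]

lemma rk_add_finrank_direction (X : AffineSubspace K V) :
    rk X + Module.finrank K X.direction = Module.finrank K V :=
  Nat.sub_add_cancel (Submodule.finrank_le _)

lemma rk_le_rk_of_le {X Y : AffineSubspace K V} (h : X ≤ Y) : rk Y ≤ rk X :=
  Nat.sub_le_sub_left (Submodule.finrank_mono (AffineSubspace.direction_le h)) _

lemma rk_lt_rk_of_lt {X Y : AffineSubspace K V} (hX : (X : Set V).Nonempty) (h : X < Y) :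
    rk Y < rk X := by
  have := Submodule.finrank_lt_finrank_of_lt (AffineSubspace.direction_lt_of_nonempty h hX)
  have := rk_add_finrank_direction X
  have := rk_add_finrank_direction Y
  omega

lemma eq_of_le_of_rk_le {X Y : AffineSubspace K V} (hX : (X : Set V).Nonempty) (h : X ≤ Y)
    (hr : rk X ≤ rk Y) : X = Y := by
  by_contra hne
  exact (rk_lt_rk_of_lt hX (h.lt_of_ne hne)).not_ge hr

lemma rk_pos {X : AffineSubspace K V} (hX : (X : Set V).Nonempty) (h : X ≠ ⊤) : 0 < rk X := by
  simpa using rk_lt_rk_of_lt hX (lt_top_iff_ne_top.2 h)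

lemma rk_add_rk_inf_le {X Y M : AffineSubspace K V} {p : V} (hpX : p ∈ X) (hpY : p ∈ Y)
    (hXM : X ≤ M) (hYM : Y ≤ M) : rk M + rk (X ⊓ Y) ≤ rk X + rk Y := by
  have := Submodule.finrank_mono
    (sup_le (AffineSubspace.direction_le hXM) (AffineSubspace.direction_le hYM))
  have := Submodule.finrank_sup_add_finrank_inf_eq X.direction Y.direction
  rw [← AffineSubspace.direction_inf_of_mem hpX hpY] at this
  have := rk_add_finrank_direction M
  have := rk_add_finrank_direction (X ⊓ Y)
  have := rk_add_finrank_direction X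
  have := rk_add_finrank_direction Y
  omega

lemma rk_inf_le {X Y : AffineSubspace K V} {p : V} (hpX : p ∈ X) (hpY : p ∈ Y) :
    rk (X ⊓ Y) ≤ rk X + rk Y := by
  simpa using rk_add_rk_inf_le hpX hpY le_top le_top

end Rank

section Poset

variable {A : Finset (AffineSubspace K V)} {X Y Z W H : AffineSubspace K V}

lemma mem_poset_iff : X ∈ poset A ↔ (∃ S ⊆ A, S.inf id = X) ∧ X ≠ ⊥ := by
  simp [poset]

lemma nonempty_of_mem_poset (hX : X ∈ poset A) : (X : Set V).Nonempty :=
  (AffineSubspace.nonempty_iff_ne_bot X).2 (mem_poset_iff.1 hX).2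

lemma top_mem_poset : (⊤ : AffineSubspace K V) ∈ poset A :=
  mem_poset_iff.2 ⟨⟨∅, Finset.empty_subset A, Finset.inf_empty⟩, top_ne_bot⟩

lemma center_le (hX : X ∈ poset A) : A.inf id ≤ X := by
  obtain ⟨⟨S, hS, rfl⟩, -⟩ := mem_poset_iff.1 hX
  exact Finset.inf_mono hS

lemma mem_principal : Y ∈ principal A X ↔ Y ∈ poset A ∧ X ≤ Y :=
  Finset.mem_filter

lemma principal_center : principal A (A.inf id) = poset A :=
  Finset.filter_true_of_mem fun _ => center_le

lemma exists_mem_of_isCentral (hc : IsCentral A) : ∃ p : V, ∀ X ∈ poset A, p ∈ X := by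
  obtain ⟨p, hp⟩ := (AffineSubspace.nonempty_iff_ne_bot (A.inf id)).2 hc
  exact ⟨p, fun X hX => center_le hX hp⟩

lemma mem_poset_of_isCentral (hc : IsCentral A) {S : Finset (AffineSubspace K V)} (hS : S ⊆ A) :
    S.inf id ∈ poset A :=
  mem_poset_iff.2 ⟨⟨S, hS, rfl⟩, fun h => hc (le_bot_iff.1 (h ▸ Finset.inf_mono hS))⟩

lemma center_mem_poset (hc : IsCentral A) : A.inf id ∈ poset A :=
  mem_poset_of_isCentral hc subset_rfl

lemma infClosed_poset (hc : IsCentral A) : InfClosed (poset A : Set (AffineSubspace K V)) := by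
  intro X hX Y hY
  obtain ⟨⟨S, hS, rfl⟩, -⟩ := mem_poset_iff.1 hX
  obtain ⟨⟨T, hT, rfl⟩, -⟩ := mem_poset_iff.1 hY
  have := mem_poset_of_isCentral hc (Finset.union_subset hS hT)
  rwa [Finset.inf_union] at this

lemma IsArrangement.mem_poset (hA : IsArrangement A) (hH : H ∈ A) : H ∈ poset A :=
  mem_poset_iff.2 ⟨⟨{H}, Finset.singleton_subset_iff.2 hH, Finset.inf_singleton⟩, (hA H hH).1⟩

lemma IsArrangement.rk_eq_one (hA : IsArrangement A) (hH : H ∈ A) : rk H = 1 := by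
  have := (hA H hH).2
  unfold rk
  omega

lemma IsArrangement.ne_top (hA : IsArrangement A) (hH : H ∈ A) : H ≠ ⊤ := by
  rintro rfl
  simpa using hA.rk_eq_one hH

lemma IsArrangement.eq_of_le [FiniteDimensional K V] (hA : IsArrangement A) (hH : H ∈ A)
    (hW : W ∈ poset A) (hWtop : W ≠ ⊤) (h : H ≤ W) : H = W :=
  eq_of_le_of_rk_le (nonempty_of_mem_poset (hA.mem_poset hH)) h
    (by rw [hA.rk_eq_one hH]; exact rk_pos (nonempty_of_mem_poset hW) hWtop)

lemma IsArrangement.rk_inf_le_rk_add_one [FiniteDimensional K V] (hA : IsArrangement A)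
    (hc : IsCentral A) (hH : H ∈ A) (hX : X ∈ poset A) : rk (H ⊓ X) ≤ rk X + 1 := by
  obtain ⟨p, hp⟩ := exists_mem_of_isCentral hc
  have := rk_inf_le (hp H (hA.mem_poset hH)) (hp X hX)
  rw [hA.rk_eq_one hH] at this
  omega

end Poset

section Meet

variable {A : Finset (AffineSubspace K V)} {X X' Y Z W : AffineSubspace K V}

lemma le_lmeet_left : Z ≤ lmeet A Z X :=
  le_sInf fun _ hW => hW.2.1

lemma le_lmeet_right : X ≤ lmeet A Z X :=
  le_sInf fun _ hW => hW.2.2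

lemma lmeet_le (hW : W ∈ poset A) (hZ : Z ≤ W) (hX : X ≤ W) : lmeet A Z X ≤ W :=
  sInf_le ⟨hW, hZ, hX⟩

lemma lmeet_mono_right (h : X ≤ X') : lmeet A Z X ≤ lmeet A Z X' :=
  sInf_le_sInf fun _ hW => ⟨hW.1, hW.2.1, h.trans hW.2.2⟩

lemma lmeet_top_right : lmeet A Z ⊤ = ⊤ :=
  top_unique le_lmeet_right

lemma lmeet_mem_poset (hc : IsCentral A) : lmeet A Z X ∈ poset A :=
  (infClosed_poset hc).sInf_mem ((poset A).finite_toSet.subset fun _ hW => hW.1) top_mem_poset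
    fun _ hW => hW.1

variable [FiniteDimensional K V]

lemma rk_lmeet_lt_rk_lmeet (hc : IsCentral A) (hW : W ∈ poset A) (hZW : Z ≤ W) (hXW : X ≤ W)
    (hX'W : ¬ X' ≤ W) (hXX' : X ≤ X') : rk (lmeet A Z X') < rk (lmeet A Z X) :=
  rk_lt_rk_of_lt (nonempty_of_mem_poset (lmeet_mem_poset hc)) <|
    (lmeet_mono_right hXX').lt_of_ne fun h => hX'W (le_lmeet_right.trans (h ▸ lmeet_le hW hZW hXW))

lemma isModularElement_of_rk_add_le (hc : IsCentral A) (hZ : Z ∈ poset A)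
    (h : ∀ X ∈ poset A, rk Z + rk X ≤ rk (lmeet A Z X) + rk (Z ⊓ X)) : IsModularElement A Z := by
  obtain ⟨p, hp⟩ := exists_mem_of_isCentral hc
  exact ⟨hZ, fun X hX => (h X hX).antisymm
    (rk_add_rk_inf_le (hp Z hZ) (hp X hX) le_lmeet_left le_lmeet_right)⟩

lemma isModularElement_center (hc : IsCentral A) : IsModularElement A (A.inf id) := by
  refine isModularElement_of_rk_add_le hc (center_mem_poset hc) fun X hX => ?_
  rw [le_antisymm (lmeet_le hX (center_le hX) le_rfl) le_lmeet_right,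
    inf_eq_left.2 (center_le hX), add_comm]

end Meet

section IdealDecomposition

variable {A : Finset (AffineSubspace K V)}

lemma IsIdealDecomposition.comp_equiv {m : ℕ} {I : Fin m → Finset (AffineSubspace K V)}
    (hD : IsIdealDecomposition A I) (σ : Fin m ≃ Fin m) : IsIdealDecomposition A (I ∘ σ) := by
  obtain ⟨hideal, hcover, hne, hrk⟩ := hD
  have hf : ∀ f : Fin m → AffineSubspace K V, (∀ i, f i ∈ (I ∘ σ) i) →
      ∀ i, (f ∘ σ.symm) i ∈ I i := fun f hf i => by simpa using hf (σ.symm i)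
  have hinf : ∀ f : Fin m → AffineSubspace K V, Finset.univ.inf (f ∘ σ.symm) = Finset.univ.inf f :=
    fun f => by simp only [Finset.inf_univ_eq_iInf]; exact σ.symm.iInf_comp
  refine ⟨fun i => hideal (σ i), fun X hX hXtop => ?_, fun f hfI => ?_, fun f hfI => ?_⟩
  · obtain ⟨j, hj⟩ := hcover X hX hXtop
    exact ⟨σ.symm j, by simpa using hj⟩
  · simpa only [hinf] using hne _ (hf f hfI)
  · rw [← hinf, hrk _ (hf f hfI)]
    exact σ.symm.sum_comp fun i => rk (f i)

lemma IsIdealDecomposition.swap {I J : Finset (AffineSubspace K V)}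
    (hD : IsIdealDecomposition A ![I, J]) : IsIdealDecomposition A ![J, I] := by
  convert hD.comp_equiv (Equiv.swap 0 1) using 1
  funext i
  fin_cases i <;> simp

variable {I J : Finset (AffineSubspace K V)} {Z Q X Y : AffineSubspace K V}

lemma IsIdealDecomposition.rk_inf_eq (hD : IsIdealDecomposition A ![I, J]) (hX : X ∈ I)
    (hY : Y ∈ J) : rk (X ⊓ Y) = rk X + rk Y := by
  simpa [Fin.univ_succ] using hD.2.2.2 ![X, Y] (Fin.forall_fin_two.2 ⟨hX, hY⟩)

lemma IsIdealDecomposition.exists_le_of_principal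
    (hD : IsIdealDecomposition A ![principal A Z, J]) (hQ : Q ∈ poset A) (hQtop : Q ≠ ⊤) :
    ∃ W ∈ poset A, W ≠ ⊤ ∧ ((Z ≤ W ∧ Q ≤ W) ∨ IsLeast {Y | Y ∈ J ∧ Q ≤ Y} W) := by
  obtain ⟨j, W, hW, hWtop, hjW⟩ := hD.2.1 Q hQ hQtop
  have hWW : W ∈ ![principal A Z, J] j ∩ principal A Q := hjW ▸ mem_principal.2 ⟨hW, le_rfl⟩
  refine ⟨W, hW, hWtop, ?_⟩
  fin_cases j
  · simp only [Fin.zero_eta, Matrix.cons_val_zero, Finset.mem_inter, mem_principal] at hWW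
    exact Or.inl ⟨hWW.1.2, hWW.2.2⟩
  · simp only [Fin.mk_one, Matrix.cons_val_one, Matrix.cons_val_zero, Finset.mem_inter,
      mem_principal] at hjW hWW
    refine Or.inr ⟨⟨hWW.1, hWW.2.2⟩, fun Y ⟨hY, hQY⟩ => ?_⟩
    have : Y ∈ J ∩ principal A Q := Finset.mem_inter.2 ⟨hY, mem_principal.2 ⟨(hD.1 1).1 hY, hQY⟩⟩
    exact (mem_principal.1 (hjW ▸ this)).2

lemma IsIdealDecomposition.le_or_mem [FiniteDimensional K V] (hA : IsArrangement A)
    (hD : IsIdealDecomposition A ![principal A Z, J]) {H : AffineSubspace K V} (hH : H ∈ A) :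
    Z ≤ H ∨ H ∈ J := by
  obtain ⟨W, hW, hWtop, ⟨hZW, hHW⟩ | hleast⟩ :=
    hD.exists_le_of_principal (hA.mem_poset hH) (hA.ne_top hH)
  · rw [hA.eq_of_le hH hW hWtop hHW]
    exact Or.inl hZW
  · rw [hA.eq_of_le hH hW hWtop hleast.1.2]
    exact Or.inr hleast.1.1

end IdealDecomposition

structure IsModularWitness (A J : Finset (AffineSubspace K V)) (Z X Y : AffineSubspace K V) :
    Prop where
  mem : Y ∈ J
  le : X ≤ Y
  inf_eq : Z ⊓ Y = Z ⊓ X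
  rk_le : rk X ≤ rk Y + rk (lmeet A Z X)

namespace IsModularWitness

variable {A J : Finset (AffineSubspace K V)} {Z X Y H W : AffineSubspace K V}

lemma rk_add_le (hw : IsModularWitness A J Z X Y)
    (hD : IsIdealDecomposition A ![principal A Z, J]) (hZ : Z ∈ poset A) :
    rk Z + rk X ≤ rk (lmeet A Z X) + rk (Z ⊓ X) := by
  have := hD.rk_inf_eq (mem_principal.2 ⟨hZ, le_rfl⟩) hw.mem
  rw [hw.inf_eq] at this
  have := hw.rk_le
  omega

variable [FiniteDimensional K V]

lemma inf_of_inf_le (hw : IsModularWitness A J Z X Y) (hA : IsArrangement A)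
    (hc : IsCentral A) (hX : X ∈ poset A) (hH : H ∈ A) (hW : W ∈ poset A) (hZW : Z ≤ W)
    (hHXW : H ⊓ X ≤ W) (hXW : ¬ X ≤ W) (hZYH : Z ⊓ Y ≤ H) :
    IsModularWitness A J Z (H ⊓ X) Y where
  mem := hw.mem
  le := inf_le_right.trans hw.le
  inf_eq := by rw [inf_left_comm, ← hw.inf_eq, inf_eq_right.2 hZYH]
  rk_le := by
    have := hA.rk_inf_le_rk_add_one hc hH hX
    have := rk_lmeet_lt_rk_lmeet hc hW hZW hHXW hXW (inf_le_right : H ⊓ X ≤ X)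
    have := hw.rk_le
    omega

lemma inf_of_inf_mem (hw : IsModularWitness A J Z X Y) (hA : IsArrangement A) (hc : IsCentral A)
    (hJ : J ⊆ poset A) (hX : X ∈ poset A) (hH : H ∈ A) (hXH : ¬ X ≤ H) (hYH : Y ⊓ H ∈ J) :
    IsModularWitness A J Z (H ⊓ X) (Y ⊓ H) where
  mem := hYH
  le := le_inf (inf_le_right.trans hw.le) inf_le_left
  inf_eq := by rw [← inf_assoc, hw.inf_eq, inf_assoc, inf_comm X H]
  rk_le := by
    have hYH_lt : Y ⊓ H < Y := inf_le_left.lt_of_ne fun h => hXH (hw.le.trans (h ▸ inf_le_right))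
    have := rk_lt_rk_of_lt (nonempty_of_mem_poset (hJ hYH)) hYH_lt
    have := rk_le_rk_of_le (lmeet_mono_right (A := A) (Z := Z) (inf_le_right : H ⊓ X ≤ X))
    have := hA.rk_inf_le_rk_add_one hc hH hX
    have := hw.rk_le
    omega

lemma exists_inf (hw : IsModularWitness A J Z X Y) (hA : IsArrangement A) (hc : IsCentral A)
    (hD : IsIdealDecomposition A ![principal A Z, J]) (hX : X ∈ poset A) (hH : H ∈ A) :
    ∃ Y', IsModularWitness A J Z (H ⊓ X) Y' := by
  by_cases hXH : X ≤ H
  · exact ⟨Y, by rwa [inf_eq_right.2 hXH]⟩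
  have hJ : J ⊆ poset A := (hD.1 1).1
  have hHL := hA.mem_poset hH
  rcases hD.le_or_mem hA hH with hZH | hHJ
  · exact ⟨Y, hw.inf_of_inf_le hA hc hX hH hHL hZH inf_le_left hXH (inf_le_left.trans hZH)⟩
  have hYH : Y ⊓ H ∈ poset A := infClosed_poset hc (hJ hw.mem) hHL
  have hHXYH : H ⊓ X ≤ Y ⊓ H := le_inf (inf_le_right.trans hw.le) inf_le_left
  obtain ⟨W, hW, hWtop, ⟨hZW, hYHW⟩ | hleast⟩ :=
    hD.exists_le_of_principal hYH (ne_top_of_le_ne_top (hA.ne_top hH) inf_le_right)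
  · -- (I3): `r(W ∩ Y) = r(W) + r(Y) > r(Y)`, while `Y ∩ H` has rank at most `r(Y) + 1`
    have hWY : Y ⊓ H = W ⊓ Y := by
      refine eq_of_le_of_rk_le (nonempty_of_mem_poset hYH) (le_inf hYHW inf_le_left) ?_
      rw [hD.rk_inf_eq (mem_principal.2 ⟨hW, hZW⟩) hw.mem]
      have := rk_pos (nonempty_of_mem_poset hW) hWtop
      have := hA.rk_inf_le_rk_add_one hc hH (hJ hw.mem)
      rw [inf_comm] at this
      omega
    have hWYH : W ⊓ Y ≤ H := hWY ▸ inf_le_right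
    refine ⟨Y, hw.inf_of_inf_le hA hc hX hH hW hZW (hHXYH.trans hYHW) ?_
      ((inf_le_inf_right Y hZW).trans hWYH)⟩
    exact fun hXW => hXH ((le_inf hXW hw.le).trans hWYH)
  · have hWeq : W = Y ⊓ H :=
      le_antisymm (le_inf (hleast.2 ⟨hw.mem, inf_le_left⟩) (hleast.2 ⟨hHJ, inf_le_right⟩))
        hleast.1.2
    exact ⟨Y ⊓ H, hw.inf_of_inf_mem hA hc hJ hX hH hXH (hWeq ▸ hleast.1.1)⟩

end IsModularWitness

section Modular

variable [FiniteDimensional K V] {A J : Finset (AffineSubspace K V)} {Z : AffineSubspace K V}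

lemma exists_isModularWitness (hA : IsArrangement A) (hc : IsCentral A)
    (hD : IsIdealDecomposition A ![principal A Z, J]) (hTop : ⊤ ∈ J)
    {S : Finset (AffineSubspace K V)} (hS : S ⊆ A) : ∃ Y, IsModularWitness A J Z (S.inf id) Y := by
  induction S using Finset.induction_on with
  | empty => exact ⟨⊤, hTop, le_top, rfl, by simp⟩
  | insert H S _ ih =>
    obtain ⟨Y, hw⟩ := ih ((Finset.subset_insert H S).trans hS)
    rw [Finset.inf_insert]
    exact hw.exists_inf hA hc hD (mem_poset_of_isCentral hc ((Finset.subset_insert H S).trans hS))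
      (hS (Finset.mem_insert_self H S))

theorem isModularElement_of_isIdealDecomposition (hA : IsArrangement A) (hc : IsCentral A)
    (hZ : Z ∈ poset A) (hD : IsIdealDecomposition A ![principal A Z, J]) :
    IsModularElement A Z := by
  rcases J.eq_empty_or_nonempty with rfl | ⟨Y, hY⟩
  · have hZc : Z = A.inf id := le_antisymm
      (Finset.le_inf fun H hH => (hD.le_or_mem hA hH).resolve_right (Finset.notMem_empty H))
      (center_le hZ)
    exact hZc ▸ isModularElement_center hc
  have hTop : ⊤ ∈ J := (hD.1 1).2 Y hY ⊤ top_mem_poset le_top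
  refine isModularElement_of_rk_add_le hc hZ fun X hX => ?_
  obtain ⟨⟨S, hS, rfl⟩, -⟩ := mem_poset_iff.1 hX
  obtain ⟨Y, hw⟩ := exists_isModularWitness hA hc hD hTop hS
  exact hw.rk_add_le hD hZ

end Modular

end

/-- **Proposition.** In a central arrangement, if `I` is a modular ideal of `L(A)`,
then `I` or its meet-complement `I^c` is a principal ideal generated by a modular
element. -/
theorem modularIdeal_principal_or_compl_principal
    {K V : Type*} [Field K] [AddCommGroup V] [Module K V] [FiniteDimensional K V]
    (A : Finset (AffineSubspace K V)) (hA : IsArrangement A) (hc : IsCentral A)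
    (I : Finset (AffineSubspace K V)) (hI : IsModularIdeal A I) :
    (∃ Z : AffineSubspace K V, IsModularElement A Z ∧ I = principal A Z) ∨
    (∃ Z : AffineSubspace K V, IsModularElement A Z ∧ meetCompl A I = principal A Z) := by
  by_cases hctop : A.inf id = ⊤
  · refine Or.inr ⟨A.inf id, isModularElement_center hc, ?_⟩
    rw [principal_center]
    refine Finset.filter_true_of_mem fun Y hY X _ => ?_
    rw [top_unique (hctop.symm.le.trans (center_le hY)), lmeet_top_right]
  obtain ⟨j, Z, hZ, -, hjZ⟩ := hI.2.1 _ (center_mem_poset hc) hctop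
  rw [principal_center, Finset.inter_eq_left.2 (hI.1 j).1] at hjZ
  fin_cases j
  · simp only [Fin.zero_eta, Matrix.cons_val_zero] at hjZ
    subst hjZ
    exact Or.inl ⟨Z, isModularElement_of_isIdealDecomposition hA hc hZ hI, rfl⟩
  · simp only [Fin.mk_one, Matrix.cons_val_one, Matrix.cons_val_zero] at hjZ
    have hD : IsIdealDecomposition A ![principal A Z, I] := hjZ ▸ hI.swap
    exact Or.inr ⟨Z, isModularElement_of_isIdealDecomposition hA hc hZ hD, hjZ⟩

end HypArr
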